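/- arXiv:2306.00423 — 8 statements merged into one kernel-verified Lean document; each statement's English description precedes it below -/
import Mathlib

section
/- Let Ω = [x_L, x_R] × [y_L, y_R] with x_L < x_R and y_L < y_R, and let κ⊥ > 0 be a constant. Suppose u : ℝ × ℝ × ℝ → ℝ is continuous on Ω × [0, ∞), twice continuously differentiable in (x, y) and once continuously differentiable in t there, and suppose P : ℝ × ℝ × ℝ → ℝ is continuous on Ω × [0, ∞) and satisfies ∫_Ω u(x,y,t) P(x,y,t) dx dy ≤ 0 for every t ≥ 0. Assume that for all (x,y) ∈ Ω and t ≥ 0: ∂u/∂t = κ⊥ (∂²u/∂x² + ∂²u/∂y²) + P(x,y,t); that u satisfies the homogeneous Dirichlet conditions u(x_L, y, t) = u(x_R, y, t) = 0 for all y ∈ [y_L, y_R]; and the periodic conditions u(x, y_L, t) = u(x, y_R, t) and ∂u/∂y(x, y_L, t) = ∂u/∂y(x, y_R, t) for all x ∈ [x_L, x_R]. Then for every t ≥ 0, ∫_Ω u(x,y,t)² dx dy ≤ ∫_Ω u(x,y,0)² dx dy. -/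
open MeasureTheory Set

/-- Continuous energy estimate (Theorem 1 of the paper).
On the rectangle `Ω = [xL,xR] × [yL,yR]`, a solution of
`∂u/∂t = κ⊥ (∂²u/∂x² + ∂²u/∂y²) + P` with homogeneous Dirichlet conditions
in `x`, periodic conditions in `y`, and a dissipative term
`∫_Ω u P ≤ 0` for all `t ≥ 0`, satisfies
`∫_Ω u(·,·,t)² ≤ ∫_Ω u(·,·,0)²` for all `t ≥ 0`. -/
theorem continuous_energy_estimate
    (xL xR yL yR : ℝ) (hx : xL < xR) (hy : yL < yR)
    (κ : ℝ) (hκ : 0 < κ)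
    (u ux uxx uy uyy ut P : ℝ → ℝ → ℝ → ℝ)
    -- smoothness: the stated derivatives hold on Ω × [0,∞)
    (hux : ∀ x ∈ Icc xL xR, ∀ y ∈ Icc yL yR, ∀ t ∈ Ici (0 : ℝ),
      HasDerivAt (fun x' => u x' y t) (ux x y t) x)
    (huxx : ∀ x ∈ Icc xL xR, ∀ y ∈ Icc yL yR, ∀ t ∈ Ici (0 : ℝ),
      HasDerivAt (fun x' => ux x' y t) (uxx x y t) x)
    (huy : ∀ x ∈ Icc xL xR, ∀ y ∈ Icc yL yR, ∀ t ∈ Ici (0 : ℝ),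
      HasDerivAt (fun y' => u x y' t) (uy x y t) y)
    (huyy : ∀ x ∈ Icc xL xR, ∀ y ∈ Icc yL yR, ∀ t ∈ Ici (0 : ℝ),
      HasDerivAt (fun y' => uy x y' t) (uyy x y t) y)
    (hut : ∀ x ∈ Icc xL xR, ∀ y ∈ Icc yL yR, ∀ t ∈ Ici (0 : ℝ),
      HasDerivAt (fun t' => u x y t') (ut x y t) t)
    -- continuity of u, its derivatives, and P on Ω × [0,∞)
    (huC : ContinuousOn (fun q : ℝ × ℝ × ℝ => u q.1 q.2.1 q.2.2)
      (Icc xL xR ×ˢ Icc yL yR ×ˢ Ici (0 : ℝ)))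
    (huxC : ContinuousOn (fun q : ℝ × ℝ × ℝ => ux q.1 q.2.1 q.2.2)
      (Icc xL xR ×ˢ Icc yL yR ×ˢ Ici (0 : ℝ)))
    (huxxC : ContinuousOn (fun q : ℝ × ℝ × ℝ => uxx q.1 q.2.1 q.2.2)
      (Icc xL xR ×ˢ Icc yL yR ×ˢ Ici (0 : ℝ)))
    (huyC : ContinuousOn (fun q : ℝ × ℝ × ℝ => uy q.1 q.2.1 q.2.2)
      (Icc xL xR ×ˢ Icc yL yR ×ˢ Ici (0 : ℝ)))
    (huyyC : ContinuousOn (fun q : ℝ × ℝ × ℝ => uyy q.1 q.2.1 q.2.2)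
      (Icc xL xR ×ˢ Icc yL yR ×ˢ Ici (0 : ℝ)))
    (hutC : ContinuousOn (fun q : ℝ × ℝ × ℝ => ut q.1 q.2.1 q.2.2)
      (Icc xL xR ×ˢ Icc yL yR ×ˢ Ici (0 : ℝ)))
    (hPC : ContinuousOn (fun q : ℝ × ℝ × ℝ => P q.1 q.2.1 q.2.2)
      (Icc xL xR ×ˢ Icc yL yR ×ˢ Ici (0 : ℝ)))
    -- the PDE
    (hPDE : ∀ x ∈ Icc xL xR, ∀ y ∈ Icc yL yR, ∀ t ∈ Ici (0 : ℝ),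
      ut x y t = κ * (uxx x y t + uyy x y t) + P x y t)
    -- dissipativity of the parallel term
    (hdiss : ∀ t ∈ Ici (0 : ℝ),
      (∫ x in Icc xL xR, ∫ y in Icc yL yR, u x y t * P x y t) ≤ 0)
    -- homogeneous Dirichlet boundary conditions in x
    (hDirichlet : ∀ y ∈ Icc yL yR, ∀ t ∈ Ici (0 : ℝ),
      u xL y t = 0 ∧ u xR y t = 0)
    -- periodic boundary conditions in y
    (hPeriodic : ∀ x ∈ Icc xL xR, ∀ t ∈ Ici (0 : ℝ),
      u x yL t = u x yR t ∧ uy x yL t = uy x yR t) :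
    ∀ t ∈ Ici (0 : ℝ),
      (∫ x in Icc xL xR, ∫ y in Icc yL yR, (u x y t) ^ 2) ≤
        ∫ x in Icc xL xR, ∫ y in Icc yL yR, (u x y 0) ^ 2 := by
  intro T hT
  have hT0 : (0:ℝ) ≤ T := hT
  have hxle : xL ≤ xR := hx.le
  have hyle : yL ≤ yR := hy.le
  set A : Set ℝ := Icc xL xR with hA
  set B : Set ℝ := Icc yL yR with hB
  set K : Set (ℝ × ℝ) := A ×ˢ B with hKdef
  have hKm : MeasurableSet K := measurableSet_Icc.prod measurableSet_Icc
  have hKc : IsCompact K := isCompact_Icc.prod isCompact_Icc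
  set ν : Measure (ℝ × ℝ) := (volume.restrict A).prod (volume.restrict B) with hν
  have hνr : ν = ((volume : Measure ℝ).prod volume).restrict K :=
    Measure.prod_restrict A B
  haveI : IsFiniteMeasure ν := by
    rw [hνr]
    exact ⟨by rw [Measure.restrict_apply_univ]; exact hKc.measure_lt_top⟩
  -- continuity of a time-slice on K
  have fixC : ∀ (f : ℝ → ℝ → ℝ → ℝ),
      ContinuousOn (fun q : ℝ × ℝ × ℝ => f q.1 q.2.1 q.2.2) (A ×ˢ B ×ˢ Ici (0:ℝ)) →
      ∀ t : ℝ, 0 ≤ t → ContinuousOn (fun p : ℝ × ℝ => f p.1 p.2 t) K := by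
    intro f hf t ht
    have hc : ContinuousOn (fun p : ℝ × ℝ => (p.1, p.2, t)) K :=
      (continuous_fst.prodMk (continuous_snd.prodMk continuous_const)).continuousOn
    exact hf.comp hc fun p hp => ⟨hp.1, hp.2, ht⟩
  -- continuity in x for fixed y, t
  have fixX : ∀ (f : ℝ → ℝ → ℝ → ℝ),
      ContinuousOn (fun q : ℝ × ℝ × ℝ => f q.1 q.2.1 q.2.2) (A ×ˢ B ×ˢ Ici (0:ℝ)) →
      ∀ y ∈ B, ∀ t : ℝ, 0 ≤ t → ContinuousOn (fun x => f x y t) A := by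
    intro f hf y hyB t ht
    have hc : ContinuousOn (fun x : ℝ => (x, y, t)) A :=
      (continuous_id.prodMk continuous_const).continuousOn
    exact hf.comp hc fun x hxA => ⟨hxA, hyB, ht⟩
  -- continuity in y for fixed x, t
  have fixY : ∀ (f : ℝ → ℝ → ℝ → ℝ),
      ContinuousOn (fun q : ℝ × ℝ × ℝ => f q.1 q.2.1 q.2.2) (A ×ˢ B ×ˢ Ici (0:ℝ)) →
      ∀ x ∈ A, ∀ t : ℝ, 0 ≤ t → ContinuousOn (fun y => f x y t) B := by
    intro f hf x hxA t ht
    have hc : ContinuousOn (fun y : ℝ => (x, y, t)) B :=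
      (continuous_const.prodMk (continuous_id.prodMk continuous_const)).continuousOn
    exact hf.comp hc fun y hyB => ⟨hxA, hyB, ht⟩
  -- integrability on K
  have intg : ∀ (g : ℝ × ℝ → ℝ), ContinuousOn g K → Integrable g ν := by
    intro g hg
    rw [hνr]
    exact hg.integrableOn_compact hKc
  have aesm : ∀ (g : ℝ × ℝ → ℝ), ContinuousOn g K → AEStronglyMeasurable g ν := by
    intro g hg
    rw [hνr]
    exact hg.aestronglyMeasurable hKm
  -- iterated integral equals product integral
  have iter : ∀ (f : ℝ → ℝ → ℝ), ContinuousOn (fun p : ℝ × ℝ => f p.1 p.2) K →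
      (∫ x in A, ∫ y in B, f x y) = ∫ p, f p.1 p.2 ∂ν := by
    intro f hf
    exact MeasureTheory.integral_integral (intg _ hf)
  -- uniform bounds on compact time slabs
  have bdd : ∀ (f : ℝ → ℝ → ℝ → ℝ),
      ContinuousOn (fun q : ℝ × ℝ × ℝ => f q.1 q.2.1 q.2.2) (A ×ˢ B ×ˢ Ici (0:ℝ)) →
      ∀ b : ℝ, ∃ C : ℝ, 0 ≤ C ∧ ∀ p ∈ K, ∀ t ∈ Icc (0:ℝ) b, |f p.1 p.2 t| ≤ C := by
    intro f hf b
    have hSc : IsCompact (A ×ˢ B ×ˢ Icc (0:ℝ) b) :=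
      isCompact_Icc.prod (isCompact_Icc.prod isCompact_Icc)
    have hsub : (A ×ˢ B ×ˢ Icc (0:ℝ) b) ⊆ A ×ˢ B ×ˢ Ici (0:ℝ) := by
      intro q hq
      exact ⟨hq.1, hq.2.1, hq.2.2.1⟩
    obtain ⟨C, hC⟩ := hSc.exists_bound_of_continuousOn (hf.mono hsub)
    refine ⟨max C 0, le_max_right _ _, ?_⟩
    intro p hp t htm
    have := hC (p.1, p.2, t) ⟨hp.1, hp.2, htm⟩
    rw [Real.norm_eq_abs] at this
    exact this.trans (le_max_left _ _)
  -- the energy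
  set E : ℝ → ℝ := fun t => ∫ p, (u p.1 p.2 t) ^ 2 ∂ν with hE
  -- derivative integrand
  set F' : ℝ → ℝ × ℝ → ℝ := fun t p => 2 * u p.1 p.2 t * ut p.1 p.2 t with hF'
  -- derivative of the energy for s > 0
  have hasDerivE : ∀ s : ℝ, 0 < s → HasDerivAt E (∫ p, F' s p ∂ν) s := by
    intro s hs
    have hs0 : (0:ℝ) ≤ s := hs.le
    obtain ⟨Cu, hCu0, hCu⟩ := bdd u huC (s + s/2)
    obtain ⟨Ct, hCt0, hCt⟩ := bdd ut hutC (s + s/2)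
    have hball : ∀ t ∈ Metric.ball s (s/2), t ∈ Icc (0:ℝ) (s + s/2) := by
      intro t htb
      rw [Metric.mem_ball, Real.dist_eq, abs_lt] at htb
      constructor <;> nlinarith [htb.1, htb.2]
    have hmeas : ∀ t : ℝ, 0 ≤ t →
        AEStronglyMeasurable (fun p : ℝ × ℝ => (u p.1 p.2 t) ^ 2) ν :=
      fun t ht => aesm _ ((fixC u huC t ht).pow 2)
    refine (hasDerivAt_integral_of_dominated_loc_of_deriv_le (Metric.ball_mem_nhds s (by positivity : (0:ℝ) < s/2))
      ?_ ?_ ?_ (bound := fun _ => 2 * Cu * Ct) ?_ ?_ ?_).2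
    · filter_upwards [Metric.ball_mem_nhds s (by positivity : (0:ℝ) < s/2)] with t htb
      exact hmeas t (hball t htb).1
    · exact intg _ ((fixC u huC s hs0).pow 2)
    · exact aesm _ ((continuousOn_const.mul (fixC u huC s hs0)).mul (fixC ut hutC s hs0))
    · rw [hνr]
      filter_upwards [ae_restrict_mem hKm] with p hp
      intro t htb
      have htI := hball t htb
      have h1 := hCu p hp t htI
      have h2 := hCt p hp t htI
      rw [hF']
      simp only [Real.norm_eq_abs, abs_mul, abs_two]
      calc 2 * |u p.1 p.2 t| * |ut p.1 p.2 t| ≤ 2 * Cu * |ut p.1 p.2 t| := by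
            apply mul_le_mul_of_nonneg_right _ (abs_nonneg _)
            linarith
        _ ≤ 2 * Cu * Ct := by
            apply mul_le_mul_of_nonneg_left h2 (by positivity)
    · exact integrable_const _
    · rw [hνr]
      filter_upwards [ae_restrict_mem hKm] with p hp
      intro t htb
      have ht0 : (0:ℝ) ≤ t := (hball t htb).1
      have := (hut p.1 hp.1 p.2 hp.2 t ht0).pow 2
      simpa [hF', Pi.pow_def] using this
  -- nonpositivity of the derivative
  have Dnonpos : ∀ s : ℝ, 0 ≤ s → (∫ p, F' s p ∂ν) ≤ 0 := by
    intro s hs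
    -- continuity of slices
    have cuu : ContinuousOn (fun p : ℝ × ℝ => u p.1 p.2 s) K := fixC u huC s hs
    have cuxx : ContinuousOn (fun p : ℝ × ℝ => uxx p.1 p.2 s) K := fixC uxx huxxC s hs
    have cuyy : ContinuousOn (fun p : ℝ × ℝ => uyy p.1 p.2 s) K := fixC uyy huyyC s hs
    have cP : ContinuousOn (fun p : ℝ × ℝ => P p.1 p.2 s) K := fixC P hPC s hs
    have i1 : Integrable (fun p : ℝ × ℝ => (2*κ) * (u p.1 p.2 s * uxx p.1 p.2 s)) ν :=
      intg _ (continuousOn_const.mul (cuu.mul cuxx))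
    have i2 : Integrable (fun p : ℝ × ℝ => (2*κ) * (u p.1 p.2 s * uyy p.1 p.2 s)) ν :=
      intg _ (continuousOn_const.mul (cuu.mul cuyy))
    have i3 : Integrable (fun p : ℝ × ℝ => 2 * (u p.1 p.2 s * P p.1 p.2 s)) ν :=
      intg _ (continuousOn_const.mul (cuu.mul cP))
    have split : (∫ p, F' s p ∂ν) =
        (∫ p, (2*κ) * (u p.1 p.2 s * uxx p.1 p.2 s) ∂ν)
        + (∫ p, (2*κ) * (u p.1 p.2 s * uyy p.1 p.2 s) ∂ν)
        + (∫ p, 2 * (u p.1 p.2 s * P p.1 p.2 s) ∂ν) := by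
      have congr1 : (∫ p, F' s p ∂ν) =
          ∫ p, ((2*κ) * (u p.1 p.2 s * uxx p.1 p.2 s)
            + ((2*κ) * (u p.1 p.2 s * uyy p.1 p.2 s)
            + 2 * (u p.1 p.2 s * P p.1 p.2 s))) ∂ν := by
        rw [hνr]
        apply setIntegral_congr_fun hKm
        intro p hp
        have := hPDE p.1 hp.1 p.2 hp.2 s hs
        simp only [hF']
        rw [this]; ring
      have i23 : Integrable (fun p : ℝ × ℝ => (2*κ) * (u p.1 p.2 s * uyy p.1 p.2 s)
          + 2 * (u p.1 p.2 s * P p.1 p.2 s)) ν := i2.add i3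
      rw [congr1, integral_add i1 i23, integral_add i2 i3]
      ring
    -- x-direction term
    have hx1 : (∫ p, (2*κ) * (u p.1 p.2 s * uxx p.1 p.2 s) ∂ν) ≤ 0 := by
      rw [integral_const_mul]
      have hI : (∫ p, u p.1 p.2 s * uxx p.1 p.2 s ∂ν) ≤ 0 := by
        rw [hν, MeasureTheory.integral_prod_symm _ (intg (fun p : ℝ × ℝ => u p.1 p.2 s * uxx p.1 p.2 s) (cuu.mul cuxx))]
        apply setIntegral_nonpos measurableSet_Icc
        intro y hyB
        have key : (∫ x in A, u x y s * uxx x y s) = ∫ x in xL..xR, u x y s * uxx x y s := by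
          rw [intervalIntegral.integral_of_le hxle, hA, integral_Icc_eq_integral_Ioc]
        rw [key]
        have hib : ∫ x in xL..xR, u x y s * uxx x y s =
            u xR y s * ux xR y s - u xL y s * ux xL y s -
              ∫ x in xL..xR, ux x y s * ux x y s := by
          apply intervalIntegral.integral_mul_deriv_eq_deriv_mul
          · intro x hxm
            rw [uIcc_of_le hxle] at hxm
            exact hux x hxm y hyB s hs
          · intro x hxm
            rw [uIcc_of_le hxle] at hxm
            exact huxx x hxm y hyB s hs
          · exact ((fixX ux huxC y hyB s hs).mono (by rw [uIcc_of_le hxle, hA])).intervalIntegrable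
          · exact ((fixX uxx huxxC y hyB s hs).mono (by rw [uIcc_of_le hxle, hA])).intervalIntegrable
        rw [hib, (hDirichlet y hyB s hs).1, (hDirichlet y hyB s hs).2]
        have : (0:ℝ) ≤ ∫ x in xL..xR, ux x y s * ux x y s :=
          intervalIntegral.integral_nonneg hxle fun x _ => mul_self_nonneg _
        linarith
      have h2κ : (0:ℝ) ≤ 2*κ := by positivity
      exact mul_nonpos_of_nonneg_of_nonpos h2κ hI
    -- y-direction term
    have hy1 : (∫ p, (2*κ) * (u p.1 p.2 s * uyy p.1 p.2 s) ∂ν) ≤ 0 := by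
      rw [integral_const_mul]
      have hI : (∫ p, u p.1 p.2 s * uyy p.1 p.2 s ∂ν) ≤ 0 := by
        rw [hν, MeasureTheory.integral_prod _ (intg (fun p : ℝ × ℝ => u p.1 p.2 s * uyy p.1 p.2 s) (cuu.mul cuyy))]
        apply setIntegral_nonpos measurableSet_Icc
        intro x hxA
        have key : (∫ y in B, u x y s * uyy x y s) = ∫ y in yL..yR, u x y s * uyy x y s := by
          rw [intervalIntegral.integral_of_le hyle, hB, integral_Icc_eq_integral_Ioc]
        rw [key]
        have hib : ∫ y in yL..yR, u x y s * uyy x y s =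
            u x yR s * uy x yR s - u x yL s * uy x yL s -
              ∫ y in yL..yR, uy x y s * uy x y s := by
          apply intervalIntegral.integral_mul_deriv_eq_deriv_mul
          · intro y hym
            rw [uIcc_of_le hyle] at hym
            exact huy x hxA y hym s hs
          · intro y hym
            rw [uIcc_of_le hyle] at hym
            exact huyy x hxA y hym s hs
          · exact ((fixY uy huyC x hxA s hs).mono (by rw [uIcc_of_le hyle, hB])).intervalIntegrable
          · exact ((fixY uyy huyyC x hxA s hs).mono (by rw [uIcc_of_le hyle, hB])).intervalIntegrable
        rw [hib, (hPeriodic x hxA s hs).1, (hPeriodic x hxA s hs).2]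
        have : (0:ℝ) ≤ ∫ y in yL..yR, uy x y s * uy x y s :=
          intervalIntegral.integral_nonneg hyle fun y _ => mul_self_nonneg _
        linarith
      have h2κ : (0:ℝ) ≤ 2*κ := by positivity
      exact mul_nonpos_of_nonneg_of_nonpos h2κ hI
    -- dissipative term
    have hP1 : (∫ p, 2 * (u p.1 p.2 s * P p.1 p.2 s) ∂ν) ≤ 0 := by
      rw [integral_const_mul]
      have := hdiss s hs
      rw [iter (fun x y => u x y s * P x y s) (cuu.mul cP)] at this
      linarith
    rw [split]
    linarith
  -- continuity of E within Ici 0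
  have contE : ∀ t₀ : ℝ, 0 ≤ t₀ → ContinuousWithinAt E (Ici (0:ℝ)) t₀ := by
    intro t₀ ht₀
    obtain ⟨Cu, hCu0, hCu⟩ := bdd u huC (t₀ + 1)
    apply MeasureTheory.continuousWithinAt_of_dominated
      (bound := fun _ => Cu ^ 2)
    · filter_upwards [self_mem_nhdsWithin] with t ht
      exact aesm _ ((fixC u huC t ht).pow 2)
    · have hmem : (Ici (0:ℝ) ∩ Metric.ball t₀ 1) ∈ nhdsWithin t₀ (Ici (0:ℝ)) :=
        Filter.inter_mem self_mem_nhdsWithin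
          (mem_nhdsWithin_of_mem_nhds (Metric.ball_mem_nhds _ one_pos))
      filter_upwards [hmem] with t ht
      rw [hνr]
      filter_upwards [ae_restrict_mem hKm] with p hp
      have htI : t ∈ Icc (0:ℝ) (t₀ + 1) := by
        obtain ⟨ht0, htb⟩ := ht
        rw [Metric.mem_ball, Real.dist_eq, abs_lt] at htb
        exact ⟨ht0, by linarith [htb.2]⟩
      have := hCu p hp t htI
      rw [Real.norm_eq_abs, abs_pow]
      exact pow_le_pow_left₀ (abs_nonneg _) this 2
    · exact integrable_const _
    · rw [hνr]
      filter_upwards [ae_restrict_mem hKm] with p hp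
      have hc : ContinuousOn (fun t : ℝ => u p.1 p.2 t) (Ici (0:ℝ)) := by
        have hmap : ∀ t ∈ Ici (0:ℝ), (p.1, p.2, t) ∈ A ×ˢ B ×ˢ Ici (0:ℝ) :=
          fun t ht => ⟨hp.1, hp.2, ht⟩
        exact huC.comp
          ((continuous_const.prodMk (continuous_const.prodMk continuous_id)).continuousOn)
          hmap
      exact ((hc.pow 2) t₀ ht₀)
  -- conclude by monotonicity
  have hgoal : E T ≤ E 0 := by
    rcases eq_or_lt_of_le hT0 with h0 | h0
    · rw [← h0]
    · have hconv : Convex ℝ (Icc (0:ℝ) T) := convex_Icc _ _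
      have hEcont : ContinuousOn E (Icc (0:ℝ) T) := by
        intro t ht
        exact (contE t ht.1).mono (Icc_subset_Ici_self)
      have hint : interior (Icc (0:ℝ) T) = Ioo (0:ℝ) T := interior_Icc
      have hdiff : DifferentiableOn ℝ E (interior (Icc (0:ℝ) T)) := by
        rw [hint]
        intro s hsm
        exact ((hasDerivE s hsm.1).differentiableAt).differentiableWithinAt
      have hderiv : ∀ s ∈ interior (Icc (0:ℝ) T), deriv E s ≤ 0 := by
        rw [hint]
        intro s hsm
        rw [(hasDerivE s hsm.1).deriv]
        exact Dnonpos s hsm.1.le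
      exact antitoneOn_of_deriv_nonpos hconv hEcont hdiff hderiv
        ⟨le_refl 0, hT0⟩ ⟨hT0, le_refl T⟩ hT0
  have e1 : (∫ x in Icc xL xR, ∫ y in Icc yL yR, (u x y T) ^ 2) = E T :=
    iter (fun x y => (u x y T) ^ 2) ((fixC u huC T hT0).pow 2)
  have e2 : (∫ x in Icc xL xR, ∫ y in Icc yL yR, (u x y 0) ^ 2) = E 0 :=
    iter (fun x y => (u x y 0) ^ 2) ((fixC u huC 0 le_rfl).pow 2)
  rw [e1, e2]
  exact hgoal
end

section
/- Let κ > 0, Δy > 0, h₁ > 0, h_n > 0 be real numbers and let τ ∈ ℝ satisfy τ ≤ −(κ/(2Δy))·max(1/h₁, 1/h_n). Then the symmetric 3×3 real matrix 𝒜 = [[−τ, κ/2, κ/2], [κ/2, κ·Δy·h₁, 0], [κ/2, 0, κ·Δy·h_n]] is positive semidefinite, i.e. vᵀ𝒜v ≥ 0 for all v ∈ ℝ³. -/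
open Matrix

/-- The 3×3 matrix collecting the periodic-boundary terms is
positive semidefinite whenever the penalty parameter `τ` satisfies
`τ ≤ -(κ/(2Δy)) * max (1/h₁) (1/hₙ)`. -/
theorem penalty_matrix_posSemidef
    (κ Δy h₁ hn τ : ℝ)
    (hκ : 0 < κ) (hΔy : 0 < Δy) (hh₁ : 0 < h₁) (hhn : 0 < hn)
    (hτ : τ ≤ -(κ / (2 * Δy)) * max (1 / h₁) (1 / hn)) :
    ∀ v : Fin 3 → ℝ,
      0 ≤ v ⬝ᵥ (!![-τ, κ / 2, κ / 2;
                    κ / 2, κ * Δy * h₁, 0;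
                    κ / 2, 0, κ * Δy * hn]).mulVec v := by
  intro v
  have h1 : τ ≤ -(κ / (2 * Δy)) * (1 / h₁) := by
    refine hτ.trans ?_
    have := le_max_left (1 / h₁) (1 / hn)
    have hneg : -(κ / (2 * Δy)) ≤ 0 := neg_nonpos.2 (by positivity)
    nlinarith
  have h2 : τ ≤ -(κ / (2 * Δy)) * (1 / hn) := by
    refine hτ.trans ?_
    have := le_max_right (1 / h₁) (1 / hn)
    have hneg : -(κ / (2 * Δy)) ≤ 0 := neg_nonpos.2 (by positivity)
    nlinarith
  have ha : τ * (2 * Δy * h₁) ≤ -κ := by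
    have := mul_le_mul_of_nonneg_right h1 (by positivity : (0:ℝ) ≤ 2 * Δy * h₁)
    calc τ * (2 * Δy * h₁) ≤ -(κ / (2 * Δy)) * (1 / h₁) * (2 * Δy * h₁) := this
      _ = -κ := by field_simp
  have hb : τ * (2 * Δy * hn) ≤ -κ := by
    have := mul_le_mul_of_nonneg_right h2 (by positivity : (0:ℝ) ≤ 2 * Δy * hn)
    calc τ * (2 * Δy * hn) ≤ -(κ / (2 * Δy)) * (1 / hn) * (2 * Δy * hn) := this
      _ = -κ := by field_simp
  simp [Matrix.mulVec, dotProduct, Fin.sum_univ_three, Matrix.vecHead, Matrix.vecTail]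
  nlinarith [mul_le_mul_of_nonneg_right ha (mul_nonneg hhn.le (sq_nonneg (v 0))),
    mul_le_mul_of_nonneg_right hb (mul_nonneg hh₁.le (sq_nonneg (v 0))),
    mul_nonneg (mul_nonneg hκ.le hhn.le) (sq_nonneg (v 0 + 2 * Δy * h₁ * v 1)),
    mul_nonneg (mul_nonneg hκ.le hh₁.le) (sq_nonneg (v 0 + 2 * Δy * hn * v 2)),
    mul_pos (mul_pos hΔy hh₁) hhn]
end

section
/- Let N be a positive integer, Δx > 0, Δy > 0, κ_∥ > 0, τ_∥ > 0, and let P_f, P_b ∈ ℝ^{N×N} satisfy ‖P_f‖₂ ≤ 1 and ‖P_b‖₂ ≤ 1. Define I_h = ΔxΔy·I_N and the numerical parallel diffusion operator P_∥ = −τ_∥ κ_∥ (I_N − (1/2)(P_f + P_b)). Then for every u ∈ ℝ^N, uᵀ((I_h P_∥) + (I_h P_∥)ᵀ)u ≤ 0. -/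
open Matrix

lemma dot_le_sqrt_mul_sqrt {N : ℕ} (u v : Fin N → ℝ) :
    u ⬝ᵥ v ≤ Real.sqrt (u ⬝ᵥ u) * Real.sqrt (v ⬝ᵥ v) := by
  have h := Real.sum_mul_le_sqrt_mul_sqrt Finset.univ u v
  simpa [dotProduct, sq] using h

lemma dot_mulVec_le {N : ℕ} (P : Matrix (Fin N) (Fin N) ℝ)
    (hP : ∀ u : Fin N → ℝ,
      Real.sqrt ((P.mulVec u) ⬝ᵥ (P.mulVec u)) ≤ Real.sqrt (u ⬝ᵥ u))
    (u : Fin N → ℝ) : u ⬝ᵥ P.mulVec u ≤ u ⬝ᵥ u := by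
  have h1 := dot_le_sqrt_mul_sqrt u (P.mulVec u)
  have h2 := hP u
  have hs : Real.sqrt (u ⬝ᵥ u) * Real.sqrt ((P.mulVec u) ⬝ᵥ (P.mulVec u))
      ≤ Real.sqrt (u ⬝ᵥ u) * Real.sqrt (u ⬝ᵥ u) :=
    mul_le_mul_of_nonneg_left h2 (Real.sqrt_nonneg _)
  have hu : (0:ℝ) ≤ u ⬝ᵥ u :=
    Finset.sum_nonneg fun i _ => mul_self_nonneg _
  have hsq : Real.sqrt (u ⬝ᵥ u) * Real.sqrt (u ⬝ᵥ u) = u ⬝ᵥ u :=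
    Real.mul_self_sqrt hu
  linarith

/-- The numerical parallel diffusion operator
`P∥ = -τ∥ κ∥ (I - (1/2)(P_f + P_b))` satisfies
`uᵀ((I_h P∥) + (I_h P∥)ᵀ)u ≤ 0` where `I_h = ΔxΔy·I`, provided the forward
and backward projection operators are l2-contractions. -/
theorem parallel_operator_dissipative_l2
    (N : ℕ) (hN : 0 < N) (Δx Δy κpar τpar : ℝ)
    (hΔx : 0 < Δx) (hΔy : 0 < Δy) (hκ : 0 < κpar) (hτ : 0 < τpar)
    (Pf Pb : Matrix (Fin N) (Fin N) ℝ)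
    (hPf : ∀ u : Fin N → ℝ,
      Real.sqrt ((Pf.mulVec u) ⬝ᵥ (Pf.mulVec u)) ≤ Real.sqrt (u ⬝ᵥ u))
    (hPb : ∀ u : Fin N → ℝ,
      Real.sqrt ((Pb.mulVec u) ⬝ᵥ (Pb.mulVec u)) ≤ Real.sqrt (u ⬝ᵥ u))
    (Ih Ppar : Matrix (Fin N) (Fin N) ℝ)
    (hIh : Ih = (Δx * Δy) • (1 : Matrix (Fin N) (Fin N) ℝ))
    (hPpar : Ppar = (-(τpar * κpar)) •
      ((1 : Matrix (Fin N) (Fin N) ℝ) - (1 / 2 : ℝ) • (Pf + Pb))) :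
    ∀ u : Fin N → ℝ, u ⬝ᵥ ((Ih * Ppar) + (Ih * Ppar)ᵀ).mulVec u ≤ 0 := by
  intro u
  have hAT : u ⬝ᵥ (Ih * Ppar)ᵀ.mulVec u = u ⬝ᵥ (Ih * Ppar).mulVec u := by
    rw [dotProduct_mulVec, vecMul_transpose, dotProduct_comm]
  rw [add_mulVec, dotProduct_add, hAT]
  have hf := dot_mulVec_le Pf hPf u
  have hb := dot_mulVec_le Pb hPb u
  have hA : (Ih * Ppar) = (-(Δx * Δy * (τpar * κpar))) •
      ((1 : Matrix (Fin N) (Fin N) ℝ) - (1 / 2 : ℝ) • (Pf + Pb)) := by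
    rw [hIh, hPpar]
    simp [smul_smul]
    ring_nf
  have key : u ⬝ᵥ (Ih * Ppar).mulVec u ≤ 0 := by
    rw [hA, smul_mulVec, dotProduct_smul, sub_mulVec, smul_mulVec,
      add_mulVec, one_mulVec]
    have hnn : 0 ≤ u ⬝ᵥ (u - (1/2 : ℝ) • (Pf.mulVec u + Pb.mulVec u)) := by
      rw [dotProduct_sub, dotProduct_smul, dotProduct_add]
      have hu : (0:ℝ) ≤ u ⬝ᵥ u :=
        Finset.sum_nonneg fun i _ => mul_self_nonneg _
      simp only [smul_eq_mul]
      linarith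
    have hc : (0:ℝ) ≤ Δx * Δy * (τpar * κpar) := by positivity
    have := mul_nonneg hc hnn
    simp only [smul_eq_mul, neg_mul]
    rw [dotProduct_sub, dotProduct_smul, dotProduct_add] at hnn
    simp only [smul_eq_mul] at hnn
    nlinarith
  linarith
end

section
/- Let N be a positive integer, let H ∈ ℝ^{N×N} be symmetric positive definite, and define the H-norm ‖u‖_H = √(uᵀHu). Let κ_∥ > 0, τ_∥ > 0, and let P_f, P_b ∈ ℝ^{N×N} satisfy ‖P_f u‖_H ≤ ‖u‖_H and ‖P_b u‖_H ≤ ‖u‖_H for all u ∈ ℝ^N. Define the numerical parallel diffusion operator P_∥ = −τ_∥ κ_∥ (I_N − (1/2)(P_f + P_b)). Then for every u ∈ ℝ^N, uᵀ((H P_∥) + (H P_∥)ᵀ)u ≤ 0. -/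
open Matrix

lemma psd_nonneg_aux {N : ℕ} {H : Matrix (Fin N) (Fin N) ℝ} (h : H.PosDef)
    (x : Fin N → ℝ) : 0 ≤ x ⬝ᵥ H.mulVec x := by
  have := h.posSemidef.dotProduct_mulVec_nonneg x
  simpa using this

lemma cauchy_aux {N : ℕ} {H : Matrix (Fin N) (Fin N) ℝ} (hs : H.IsSymm) (h : H.PosDef)
    (u v : Fin N → ℝ) :
    u ⬝ᵥ H.mulVec v ≤ Real.sqrt (u ⬝ᵥ H.mulVec u) * Real.sqrt (v ⬝ᵥ H.mulVec v) := by
  have hsym : ∀ x y : Fin N → ℝ, x ⬝ᵥ H.mulVec y = y ⬝ᵥ H.mulVec x := by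
    intro x y
    rw [dotProduct_mulVec, ← mulVec_transpose, hs.eq, dotProduct_comm]
  have hquad : ∀ t : ℝ, 0 ≤ (v ⬝ᵥ H.mulVec v) * t ^ 2 + (2 * (u ⬝ᵥ H.mulVec v)) * t
      + (u ⬝ᵥ H.mulVec u) := by
    intro t
    have := psd_nonneg_aux h (u + t • v)
    simp only [mulVec_add, mulVec_smul, dotProduct_add, add_dotProduct,
      dotProduct_smul, smul_dotProduct, smul_eq_mul] at this
    rw [hsym v u] at this
    nlinarith [this]
  have hd : discrim (v ⬝ᵥ H.mulVec v) (2 * (u ⬝ᵥ H.mulVec v)) (u ⬝ᵥ H.mulVec u) ≤ 0 :=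
    discrim_le_zero (fun t => by have := hquad t; nlinarith)
  have hsq : (u ⬝ᵥ H.mulVec v) ^ 2 ≤ (u ⬝ᵥ H.mulVec u) * (v ⬝ᵥ H.mulVec v) := by
    unfold discrim at hd; nlinarith
  calc u ⬝ᵥ H.mulVec v ≤ |u ⬝ᵥ H.mulVec v| := le_abs_self _
    _ = Real.sqrt ((u ⬝ᵥ H.mulVec v) ^ 2) := (Real.sqrt_sq_eq_abs _).symm
    _ ≤ Real.sqrt ((u ⬝ᵥ H.mulVec u) * (v ⬝ᵥ H.mulVec v)) := Real.sqrt_le_sqrt hsq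
    _ = Real.sqrt (u ⬝ᵥ H.mulVec u) * Real.sqrt (v ⬝ᵥ H.mulVec v) :=
        Real.sqrt_mul (psd_nonneg_aux h u) _

/-- H-norm version of the parallel dissipativity result: if the
forward and backward maps are contractions in the H-norm, then
`uᵀ((H P∥) + (H P∥)ᵀ)u ≤ 0` for `P∥ = -τ∥ κ∥ (I - (1/2)(P_f + P_b))`. -/
theorem parallel_operator_dissipative_H
    (N : ℕ) (hN : 0 < N) (κpar τpar : ℝ) (hκ : 0 < κpar) (hτ : 0 < τpar)
    (H : Matrix (Fin N) (Fin N) ℝ) (hHsymm : H.IsSymm) (hHpos : H.PosDef)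
    (Pf Pb : Matrix (Fin N) (Fin N) ℝ)
    (hPf : ∀ u : Fin N → ℝ,
      Real.sqrt ((Pf.mulVec u) ⬝ᵥ H.mulVec (Pf.mulVec u))
        ≤ Real.sqrt (u ⬝ᵥ H.mulVec u))
    (hPb : ∀ u : Fin N → ℝ,
      Real.sqrt ((Pb.mulVec u) ⬝ᵥ H.mulVec (Pb.mulVec u))
        ≤ Real.sqrt (u ⬝ᵥ H.mulVec u))
    (Ppar : Matrix (Fin N) (Fin N) ℝ)
    (hPpar : Ppar = (-(τpar * κpar)) •
      ((1 : Matrix (Fin N) (Fin N) ℝ) - (1 / 2 : ℝ) • (Pf + Pb))) :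
    ∀ u : Fin N → ℝ, u ⬝ᵥ ((H * Ppar) + (H * Ppar)ᵀ).mulVec u ≤ 0 := by
  intro u
  have hnn := psd_nonneg_aux hHpos u
  -- bound the cross terms
  have hf : u ⬝ᵥ H.mulVec (Pf.mulVec u) ≤ u ⬝ᵥ H.mulVec u := by
    calc u ⬝ᵥ H.mulVec (Pf.mulVec u)
        ≤ Real.sqrt (u ⬝ᵥ H.mulVec u) * Real.sqrt ((Pf.mulVec u) ⬝ᵥ H.mulVec (Pf.mulVec u)) :=
          cauchy_aux hHsymm hHpos u _
      _ ≤ Real.sqrt (u ⬝ᵥ H.mulVec u) * Real.sqrt (u ⬝ᵥ H.mulVec u) :=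
          mul_le_mul_of_nonneg_left (hPf u) (Real.sqrt_nonneg _)
      _ = u ⬝ᵥ H.mulVec u := Real.mul_self_sqrt hnn
  have hb : u ⬝ᵥ H.mulVec (Pb.mulVec u) ≤ u ⬝ᵥ H.mulVec u := by
    calc u ⬝ᵥ H.mulVec (Pb.mulVec u)
        ≤ Real.sqrt (u ⬝ᵥ H.mulVec u) * Real.sqrt ((Pb.mulVec u) ⬝ᵥ H.mulVec (Pb.mulVec u)) :=
          cauchy_aux hHsymm hHpos u _
      _ ≤ Real.sqrt (u ⬝ᵥ H.mulVec u) * Real.sqrt (u ⬝ᵥ H.mulVec u) :=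
          mul_le_mul_of_nonneg_left (hPb u) (Real.sqrt_nonneg _)
      _ = u ⬝ᵥ H.mulVec u := Real.mul_self_sqrt hnn
  have htrans : u ⬝ᵥ ((H * Ppar)ᵀ).mulVec u = u ⬝ᵥ (H * Ppar).mulVec u := by
    rw [mulVec_transpose, dotProduct_mulVec, dotProduct_comm]
  have hval : u ⬝ᵥ (H * Ppar).mulVec u = (-(τpar * κpar)) * ((u ⬝ᵥ H.mulVec u)
      - (1/2) * (u ⬝ᵥ H.mulVec (Pf.mulVec u)) - (1/2) * (u ⬝ᵥ H.mulVec (Pb.mulVec u))) := by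
    subst hPpar
    rw [← mulVec_mulVec]
    simp only [smul_mulVec, sub_mulVec, add_mulVec, one_mulVec, mulVec_smul,
      mulVec_add, mulVec_sub, dotProduct_smul, dotProduct_sub, dotProduct_add, smul_eq_mul]
    ring
  rw [add_mulVec, dotProduct_add, htrans, hval]
  have hτκ : 0 < τpar * κpar := mul_pos hτ hκ
  nlinarith
end

section
/- Let N be a positive integer, let H ∈ ℝ^{N×N} be symmetric positive definite, and let P_⊥, P_∥ ∈ ℝ^{N×N} satisfy vᵀ((HP_⊥) + (HP_⊥)ᵀ)v ≤ 0 and vᵀ((HP_∥) + (HP_∥)ᵀ)v ≤ 0 for all v ∈ ℝ^N. Let f ∈ ℝ^N and let u : ℝ → ℝ^N be differentiable with u(0) = f and u'(t) = (P_⊥ + P_∥)·u(t) for all t ≥ 0. Then ‖u(t)‖_H ≤ ‖f‖_H for all t ≥ 0, where ‖v‖_H = √(vᵀHv). -/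
open Matrix

/-- Stability of the semi-discrete approximation: if both the
perpendicular and parallel numerical diffusion operators are dissipative in
the H inner product, then the solution of `u' = (P⊥ + P∥) u`, `u 0 = f`,
satisfies `‖u t‖_H ≤ ‖f‖_H` for all `t ≥ 0`. -/
theorem semi_discrete_stability
    (N : ℕ) (hN : 0 < N)
    (H : Matrix (Fin N) (Fin N) ℝ) (hHsymm : H.IsSymm) (hHpos : H.PosDef)
    (Pperp Ppar : Matrix (Fin N) (Fin N) ℝ)
    (hPerp : ∀ v : Fin N → ℝ,
      v ⬝ᵥ ((H * Pperp) + (H * Pperp)ᵀ).mulVec v ≤ 0)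
    (hPar : ∀ v : Fin N → ℝ,
      v ⬝ᵥ ((H * Ppar) + (H * Ppar)ᵀ).mulVec v ≤ 0)
    (f : Fin N → ℝ) (u : ℝ → Fin N → ℝ)
    (hu0 : u 0 = f)
    (hode : ∀ t : ℝ, 0 ≤ t →
      HasDerivAt u ((Pperp + Ppar).mulVec (u t)) t) :
    ∀ t : ℝ, 0 ≤ t →
      Real.sqrt ((u t) ⬝ᵥ H.mulVec (u t)) ≤ Real.sqrt (f ⬝ᵥ H.mulVec f) := by
  set A : Matrix (Fin N) (Fin N) ℝ := Pperp + Ppar with hA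
  set φ : ℝ → ℝ := fun s => u s ⬝ᵥ H.mulVec (u s) with hφ
  -- derivative of the energy
  have hderiv : ∀ t : ℝ, 0 ≤ t → HasDerivAt φ
      ((A.mulVec (u t)) ⬝ᵥ H.mulVec (u t) + (u t) ⬝ᵥ H.mulVec (A.mulVec (u t))) t := by
    intro t ht
    have hcomp := hasDerivAt_pi.1 (hode t ht)
    have h1 : HasDerivAt (fun s => u s ⬝ᵥ H.mulVec (u s))
        (∑ i, ((A.mulVec (u t)) i * (H.mulVec (u t)) i +
          u t i * (∑ j, H i j * (A.mulVec (u t)) j))) t := by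
      simp only [Matrix.mulVec, dotProduct]
      apply HasDerivAt.fun_sum
      intro i _
      exact (hcomp i).mul (HasDerivAt.fun_sum fun j _ => (hcomp j).const_mul (H i j))
    convert h1 using 1
    simp only [dotProduct, Matrix.mulVec, Finset.sum_add_distrib]
  -- derivative is nonpositive
  have hnonpos : ∀ t : ℝ, 0 ≤ t →
      (A.mulVec (u t)) ⬝ᵥ H.mulVec (u t) + (u t) ⬝ᵥ H.mulVec (A.mulVec (u t)) ≤ 0 := by
    intro t ht
    set w := u t
    have key := add_nonpos (hPerp w) (hPar w)
    have hsum : w ⬝ᵥ ((H * Pperp) + (H * Pperp)ᵀ).mulVec w +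
        w ⬝ᵥ ((H * Ppar) + (H * Ppar)ᵀ).mulVec w =
        w ⬝ᵥ ((H * A) + (H * A)ᵀ).mulVec w := by
      simp [hA, Matrix.mul_add, Matrix.transpose_add, Matrix.add_mulVec, dotProduct_add]
      ring
    rw [hsum] at key
    have e1 : (u t) ⬝ᵥ H.mulVec (A.mulVec w) = w ⬝ᵥ (H * A).mulVec w := by
      rw [← Matrix.mulVec_mulVec]
    have e2 : (A.mulVec w) ⬝ᵥ H.mulVec w = w ⬝ᵥ (H * A)ᵀ.mulVec w := by
      rw [Matrix.transpose_mul, hHsymm.eq, ← Matrix.mulVec_mulVec]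
      conv_rhs => rw [Matrix.dotProduct_mulVec, Matrix.vecMul_transpose]
    calc (A.mulVec w) ⬝ᵥ H.mulVec w + w ⬝ᵥ H.mulVec (A.mulVec w)
        = w ⬝ᵥ ((H * A) + (H * A)ᵀ).mulVec w := by
          rw [e1, e2, Matrix.add_mulVec, dotProduct_add]; ring
      _ ≤ 0 := key
  -- energy is antitone on [0, ∞)
  have hanti : AntitoneOn φ (Set.Ici (0 : ℝ)) := by
    apply antitoneOn_of_deriv_nonpos (convex_Ici 0)
    · intro t ht
      exact (hderiv t ht).continuousAt.continuousWithinAt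
    · intro t ht
      rw [interior_Ici] at ht
      exact ((hderiv t (le_of_lt ht)).differentiableAt).differentiableWithinAt
    · intro t ht
      rw [interior_Ici] at ht
      rw [(hderiv t (le_of_lt ht)).deriv]
      exact hnonpos t (le_of_lt ht)
  intro t ht
  have : φ t ≤ φ 0 := hanti (Set.self_mem_Ici) ht ht
  rw [hφ] at this
  simp only [hu0] at this
  exact Real.sqrt_le_sqrt this
end

section
/- Let N be a positive integer, let H ∈ ℝ^{N×N} be symmetric positive definite, and let P_⊥, P_∥ ∈ ℝ^{N×N} satisfy vᵀ((HP_⊥) + (HP_⊥)ᵀ)v ≤ 0 and vᵀ((HP_∥) + (HP_∥)ᵀ)v ≤ 0 for all v ∈ ℝ^N. Let f ∈ ℝ^N, let (Δt_l)_{l≥0} be any sequence of positive time steps, and let (u^l)_{l≥0} ⊂ ℝ^N satisfy u^0 = f and the backward Euler relation u^{l+1} − u^l = Δt_l·(P_⊥ + P_∥)·u^{l+1} for every l ≥ 0. Then ‖u^l‖_H ≤ ‖f‖_H for all l ≥ 0, where ‖v‖_H = √(vᵀHv). In particular the scheme is unconditionally stable: the bound holds for every choice of positive time steps. -/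
open Matrix

/-- Unconditional stability of the fully-discrete backward Euler
approximation: with dissipative perpendicular and parallel operators, the
iterates `u^{l+1} - u^l = Δt_l (P⊥ + P∥) u^{l+1}`, `u^0 = f`, satisfy
`‖u^l‖_H ≤ ‖f‖_H` for all `l ≥ 0`, for every choice of positive time steps. -/
theorem fully_discrete_stability
    (N : ℕ) (hN : 0 < N)
    (H : Matrix (Fin N) (Fin N) ℝ) (hHsymm : H.IsSymm) (hHpos : H.PosDef)
    (Pperp Ppar : Matrix (Fin N) (Fin N) ℝ)
    (hPerp : ∀ v : Fin N → ℝ,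
      v ⬝ᵥ ((H * Pperp) + (H * Pperp)ᵀ).mulVec v ≤ 0)
    (hPar : ∀ v : Fin N → ℝ,
      v ⬝ᵥ ((H * Ppar) + (H * Ppar)ᵀ).mulVec v ≤ 0)
    (Δt : ℕ → ℝ) (hΔt : ∀ l, 0 < Δt l)
    (f : Fin N → ℝ) (u : ℕ → Fin N → ℝ)
    (hu0 : u 0 = f)
    (hstep : ∀ l : ℕ,
      u (l + 1) - u l = Δt l • (Pperp + Ppar).mulVec (u (l + 1))) :
    ∀ l : ℕ,
      Real.sqrt ((u l) ⬝ᵥ H.mulVec (u l)) ≤ Real.sqrt (f ⬝ᵥ H.mulVec f) := by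
  set A := Pperp + Ppar with hAdef
  have hA : ∀ v : Fin N → ℝ, v ⬝ᵥ ((H * A) + (H * A)ᵀ).mulVec v ≤ 0 := by
    intro v
    have h1 : (H * A) + (H * A)ᵀ =
        (((H * Pperp) + (H * Pperp)ᵀ) + ((H * Ppar) + (H * Ppar)ᵀ)) := by
      rw [hAdef, Matrix.mul_add, Matrix.transpose_add]
      abel
    rw [h1, Matrix.add_mulVec, dotProduct_add]
    exact add_nonpos (hPerp v) (hPar v)
  have hstep2 : ∀ l : ℕ,
      (u (l + 1)) ⬝ᵥ H.mulVec (u (l + 1)) ≤ (u l) ⬝ᵥ H.mulVec (u l) := by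
    intro l
    have hul : u l = u (l + 1) - Δt l • A.mulVec (u (l + 1)) := by
      have h := sub_eq_iff_eq_add'.mp (hstep l)
      exact eq_sub_of_add_eq h.symm
    set w := u (l + 1) with hw
    set c := Δt l with hc
    set z := A.mulVec w with hz
    have hcpos : 0 < c := hΔt l
    have hzw : z ⬝ᵥ H.mulVec w = w ⬝ᵥ ((H * A)ᵀ).mulVec w := by
      rw [hz, ← Matrix.vecMul_transpose, ← Matrix.dotProduct_mulVec,
        Matrix.mulVec_mulVec, Matrix.transpose_mul, hHsymm.eq]
    have hwz : w ⬝ᵥ H.mulVec z = w ⬝ᵥ (H * A).mulVec w := by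
      rw [hz, Matrix.mulVec_mulVec]
    have hcross : w ⬝ᵥ H.mulVec z + z ⬝ᵥ H.mulVec w ≤ 0 := by
      rw [hwz, hzw, ← dotProduct_add, ← Matrix.add_mulVec]
      exact hA w
    have hquad : 0 ≤ z ⬝ᵥ H.mulVec z := by
      have := hHpos.posSemidef.dotProduct_mulVec_nonneg z
      simpa using this
    calc w ⬝ᵥ H.mulVec w
        ≤ w ⬝ᵥ H.mulVec w - c * (w ⬝ᵥ H.mulVec z + z ⬝ᵥ H.mulVec w)
            + c * c * (z ⬝ᵥ H.mulVec z) := by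
          nlinarith [mul_nonpos_of_nonneg_of_nonpos hcpos.le hcross,
            mul_nonneg (mul_nonneg hcpos.le hcpos.le) hquad]
      _ = (w - c • z) ⬝ᵥ H.mulVec (w - c • z) := by
          simp only [Matrix.mulVec_sub, Matrix.mulVec_smul, sub_dotProduct,
            dotProduct_sub, smul_dotProduct, dotProduct_smul, smul_eq_mul]
          ring
      _ = (u l) ⬝ᵥ H.mulVec (u l) := by rw [← hul]
  intro l
  apply Real.sqrt_le_sqrt
  induction l with
  | zero => rw [hu0]
  | succ n ih => exact le_trans (hstep2 n) ih
end

section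
/- Let N be a positive integer, let P_⊥ ∈ ℝ^{N×N} satisfy vᵀ(P_⊥ + P_⊥ᵀ)v ≤ 0 for all v ∈ ℝ^N, and let P_f, P_b ∈ ℝ^{N×N} satisfy ‖P_f‖₂ ≤ 1 and ‖P_b‖₂ ≤ 1. Let κ_∥ > 0, τ_∥ > 0, f ∈ ℝ^N, and let (Δt_l)_{l≥0} be positive time steps. Define the split scheme: u^0 = f, and for each l ≥ 0 let u^{l+1/2} ∈ ℝ^N solve (I_N − Δt_l P_⊥)·u^{l+1/2} = u^l, and set u^{l+1} = (1 + Δt_l τ_∥ κ_∥)^{-1}·(u^{l+1/2} + (1/2)Δt_l τ_∥ κ_∥ (P_b + P_f)·u^{l+1/2}). Then ‖u^l‖₂ ≤ ‖f‖₂ for all l ≥ 0, for every choice of positive time steps. -/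
open Matrix

noncomputable def enr {N : ℕ} (v : Fin N → ℝ) : ℝ :=
  ‖(WithLp.equiv 2 (Fin N → ℝ)).symm v‖

lemma enr_eq {N : ℕ} (v : Fin N → ℝ) : enr v = Real.sqrt (v ⬝ᵥ v) := by
  rw [enr, EuclideanSpace.norm_eq]
  congr 1
  simp [dotProduct, sq]

lemma enr_add {N : ℕ} (v w : Fin N → ℝ) : enr (v + w) ≤ enr v + enr w := by
  simpa [enr] using norm_add_le ((WithLp.equiv 2 (Fin N → ℝ)).symm v)
    ((WithLp.equiv 2 (Fin N → ℝ)).symm w)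

lemma enr_smul {N : ℕ} (c : ℝ) (v : Fin N → ℝ) : enr (c • v) = |c| * enr v := by
  simp [enr, norm_smul, Real.norm_eq_abs]

lemma enr_stage1 (N : ℕ) (P : Matrix (Fin N) (Fin N) ℝ)
    (hPerp : ∀ v : Fin N → ℝ, v ⬝ᵥ (P + Pᵀ).mulVec v ≤ 0)
    (c : ℝ) (hc : 0 < c) (w : Fin N → ℝ) :
    enr w ≤ enr (((1 : Matrix (Fin N) (Fin N) ℝ) - c • P).mulVec w) := by
  rw [enr_eq, enr_eq]
  apply Real.sqrt_le_sqrt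
  have h1 : ((1 : Matrix (Fin N) (Fin N) ℝ) - c • P).mulVec w
      = w - c • P.mulVec w := by
    simp [sub_mulVec, smul_mulVec]
  rw [h1]
  have hsym : w ⬝ᵥ (P + Pᵀ).mulVec w = w ⬝ᵥ P.mulVec w + (P.mulVec w) ⬝ᵥ w := by
    rw [add_mulVec, dotProduct_add]
    congr 1
    rw [dotProduct_mulVec, vecMul_transpose]
  have h2 := hPerp w
  rw [hsym] at h2
  have h3 : (0:ℝ) ≤ (P.mulVec w) ⬝ᵥ (P.mulVec w) :=
    Finset.sum_nonneg fun i _ => mul_self_nonneg _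
  have hexp : (w - c • P.mulVec w) ⬝ᵥ (w - c • P.mulVec w)
      = w ⬝ᵥ w - c * (w ⬝ᵥ P.mulVec w) - c * ((P.mulVec w) ⬝ᵥ w)
        + c^2 * ((P.mulVec w) ⬝ᵥ (P.mulVec w)) := by
    simp [dotProduct_sub, sub_dotProduct, dotProduct_smul, smul_dotProduct]
    ring
  rw [hexp]
  nlinarith

/-- Unconditional l2 stability of the operator-split fully
discrete scheme: the perpendicular stage solves
`(I - Δt_l P⊥) u^{l+1/2} = u^l` and the parallel penalty stage sets
`u^{l+1} = (1 + Δt_l τ∥ κ∥)⁻¹ (u^{l+1/2} + (1/2) Δt_l τ∥ κ∥ (P_b + P_f) u^{l+1/2})`;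
then `‖u^l‖₂ ≤ ‖f‖₂` for all `l` and all positive time steps. -/
theorem split_scheme_stability
    (N : ℕ) (hN : 0 < N)
    (Pperp : Matrix (Fin N) (Fin N) ℝ)
    (hPerp : ∀ v : Fin N → ℝ, v ⬝ᵥ (Pperp + Pperpᵀ).mulVec v ≤ 0)
    (Pf Pb : Matrix (Fin N) (Fin N) ℝ)
    (hPf : ∀ v : Fin N → ℝ,
      Real.sqrt ((Pf.mulVec v) ⬝ᵥ (Pf.mulVec v)) ≤ Real.sqrt (v ⬝ᵥ v))
    (hPb : ∀ v : Fin N → ℝ,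
      Real.sqrt ((Pb.mulVec v) ⬝ᵥ (Pb.mulVec v)) ≤ Real.sqrt (v ⬝ᵥ v))
    (κpar τpar : ℝ) (hκ : 0 < κpar) (hτ : 0 < τpar)
    (Δt : ℕ → ℝ) (hΔt : ∀ l, 0 < Δt l)
    (f : Fin N → ℝ) (u uh : ℕ → Fin N → ℝ)
    (hu0 : u 0 = f)
    (hstage1 : ∀ l : ℕ,
      ((1 : Matrix (Fin N) (Fin N) ℝ) - Δt l • Pperp).mulVec (uh l) = u l)
    (hstage2 : ∀ l : ℕ,
      u (l + 1) = (1 + Δt l * τpar * κpar)⁻¹ •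
        (uh l + ((1 / 2 : ℝ) * (Δt l * τpar * κpar)) •
          (Pb + Pf).mulVec (uh l))) :
    ∀ l : ℕ, Real.sqrt ((u l) ⬝ᵥ (u l)) ≤ Real.sqrt (f ⬝ᵥ f) := by
  have key : ∀ l : ℕ, enr (u l) ≤ enr f := by
    intro l
    induction l with
    | zero => rw [hu0]
    | succ l ih =>
      set a := Δt l * τpar * κpar with ha
      have ha0 : 0 < a := mul_pos (mul_pos (hΔt l) hτ) hκ
      -- stage 1: enr (uh l) ≤ enr (u l)
      have h1 : enr (uh l) ≤ enr (u l) := by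
        rw [← hstage1 l]
        exact enr_stage1 N Pperp hPerp (Δt l) (hΔt l) (uh l)
      -- stage 2
      have hPbf : enr ((Pb + Pf).mulVec (uh l)) ≤ 2 * enr (uh l) := by
        rw [add_mulVec]
        calc enr (Pb.mulVec (uh l) + Pf.mulVec (uh l))
            ≤ enr (Pb.mulVec (uh l)) + enr (Pf.mulVec (uh l)) := enr_add _ _
          _ ≤ enr (uh l) + enr (uh l) := by
              rw [enr_eq, enr_eq, enr_eq]
              exact add_le_add (hPb (uh l)) (hPf (uh l))
          _ = 2 * enr (uh l) := by ring
      have h2 : enr (u (l + 1)) ≤ enr (uh l) := by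
        rw [hstage2 l, enr_smul]
        have hinv : |(1 + a)⁻¹| = (1 + a)⁻¹ := abs_of_pos (by positivity)
        rw [hinv]
        have htr : enr (uh l + ((1 / 2 : ℝ) * a) • (Pb + Pf).mulVec (uh l))
            ≤ (1 + a) * enr (uh l) := by
          calc enr (uh l + ((1 / 2 : ℝ) * a) • (Pb + Pf).mulVec (uh l))
              ≤ enr (uh l) + enr (((1 / 2 : ℝ) * a) • (Pb + Pf).mulVec (uh l)) :=
                enr_add _ _
            _ = enr (uh l) + ((1 / 2 : ℝ) * a) * enr ((Pb + Pf).mulVec (uh l)) := by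
                rw [enr_smul, abs_of_pos (by positivity)]
            _ ≤ enr (uh l) + ((1 / 2 : ℝ) * a) * (2 * enr (uh l)) := by
                have : (0:ℝ) ≤ (1 / 2 : ℝ) * a := by positivity
                nlinarith [hPbf]
            _ = (1 + a) * enr (uh l) := by ring
        calc (1 + a)⁻¹ * enr (uh l + ((1 / 2 : ℝ) * a) • (Pb + Pf).mulVec (uh l))
            ≤ (1 + a)⁻¹ * ((1 + a) * enr (uh l)) := by
              apply mul_le_mul_of_nonneg_left htr (by positivity)
          _ = enr (uh l) := by field_simp
      exact le_trans h2 (le_trans h1 ih)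
  intro l
  have := key l
  rwa [enr_eq, enr_eq] at this
end

section
/- Let κ > 0 and define ψ : ℝ² → ℝ by ψ(x,y) = cos(πx)·cos(πy), and u : ℝ³ → ℝ by u(x,y,t) = ((1 − exp(−2tκπ²))/κ)·ψ(x,y). Then: (i) u(x,y,0) = 0 for all (x,y); (ii) for all (x,y,t), ∂u/∂t = κ·(∂²u/∂x² + ∂²u/∂y²) + 2π²·ψ(x,y); and (iii) for all (x,y,t), the in-plane magnetic field B(x,y) = (−∂ψ/∂y, ∂ψ/∂x) satisfies B(x,y)·∇_{x,y}u(x,y,t) = 0, i.e. the gradient of u is everywhere orthogonal to B, so the parallel diffusion term vanishes along this solution. -/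
open Real

private lemma hd_cos (a : ℝ) :
    HasDerivAt (fun x => Real.cos (π * x)) (-(π * Real.sin (π * a))) a := by
  have h := (Real.hasDerivAt_cos (π * a)).comp a ((hasDerivAt_id a).const_mul π)
  simpa [Function.comp_def, mul_comm] using h

private lemma hd_sin (a : ℝ) :
    HasDerivAt (fun x => Real.sin (π * x)) (π * Real.cos (π * a)) a := by
  have h := (Real.hasDerivAt_sin (π * a)).comp a ((hasDerivAt_id a).const_mul π)
  simpa [Function.comp_def, mul_comm] using h

private lemma hd_c (κ : ℝ) (hκ : κ ≠ 0) (t : ℝ) :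
    HasDerivAt (fun t' => (1 - Real.exp (-(2 * t' * κ * π ^ 2))) / κ)
      (2 * π ^ 2 * Real.exp (-(2 * t * κ * π ^ 2))) t := by
  have h1 : HasDerivAt (fun t' : ℝ => -(2 * t' * κ * π ^ 2)) (-(2 * κ * π ^ 2)) t := by
    have := ((((hasDerivAt_id t).const_mul 2).mul_const κ).mul_const (π ^ 2)).neg
    exact this.congr_deriv (by ring)
  have h2 := (Real.hasDerivAt_exp (-(2 * t * κ * π ^ 2))).comp t h1
  have h3 := (h2.const_sub 1).div_const κ
  refine h3.congr_deriv ?_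
  rw [div_eq_iff hκ]
  ring

/-- The exact solution of the NIMROD benchmark:
with `ψ(x,y) = cos(πx)cos(πy)` and
`u(x,y,t) = ((1 - exp(-2tκπ²))/κ) ψ(x,y)`, (i) `u(x,y,0) = 0`,
(ii) `∂u/∂t = κ (∂²u/∂x² + ∂²u/∂y²) + 2π² ψ`, and (iii) the field
`B = (-∂ψ/∂y, ∂ψ/∂x)` is everywhere orthogonal to `∇_{x,y} u`. -/
theorem nimrod_benchmark_exact_solution
    (κ : ℝ) (hκ : 0 < κ)
    (ψ : ℝ → ℝ → ℝ)
    (hψ : ∀ x y, ψ x y = Real.cos (π * x) * Real.cos (π * y))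
    (u : ℝ → ℝ → ℝ → ℝ)
    (hu : ∀ x y t, u x y t = ((1 - Real.exp (-(2 * t * κ * π ^ 2))) / κ) * ψ x y) :
    (∀ x y : ℝ, u x y 0 = 0) ∧
    (∀ x y t : ℝ,
      deriv (fun t' => u x y t') t =
        κ * (deriv (fun x' => deriv (fun x'' => u x'' y t) x') x +
             deriv (fun y' => deriv (fun y'' => u x y'' t) y') y) +
        2 * π ^ 2 * ψ x y) ∧
    (∀ x y t : ℝ,
      (-(deriv (fun y' => ψ x y') y)) * deriv (fun x' => u x' y t) x +
        (deriv (fun x' => ψ x' y) x) * deriv (fun y' => u x y' t) y = 0) := by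
  have hκ' : κ ≠ 0 := ne_of_gt hκ
  -- first derivative of u in x
  have hux : ∀ y t x : ℝ, deriv (fun x' => u x' y t) x =
      ((1 - Real.exp (-(2 * t * κ * π ^ 2))) / κ) *
        (-(π * Real.sin (π * x)) * Real.cos (π * y)) := by
    intro y t x
    have he : (fun x' => u x' y t) = fun x' =>
        ((1 - Real.exp (-(2 * t * κ * π ^ 2))) / κ) *
          (Real.cos (π * x') * Real.cos (π * y)) := by
      funext x'; rw [hu, hψ]
    rw [he]
    exact (((hd_cos x).mul_const (Real.cos (π * y))).const_mul _).deriv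
  have huy : ∀ x t y : ℝ, deriv (fun y' => u x y' t) y =
      ((1 - Real.exp (-(2 * t * κ * π ^ 2))) / κ) *
        (Real.cos (π * x) * -(π * Real.sin (π * y))) := by
    intro x t y
    have he : (fun y' => u x y' t) = fun y' =>
        ((1 - Real.exp (-(2 * t * κ * π ^ 2))) / κ) *
          (Real.cos (π * x) * Real.cos (π * y')) := by
      funext y'; rw [hu, hψ]
    rw [he]
    exact (((hd_cos y).const_mul (Real.cos (π * x))).const_mul _).deriv
  -- second derivatives
  have huxx : ∀ y t x : ℝ, deriv (fun x' => deriv (fun x'' => u x'' y t) x') x =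
      ((1 - Real.exp (-(2 * t * κ * π ^ 2))) / κ) *
        (-(π * (π * Real.cos (π * x))) * Real.cos (π * y)) := by
    intro y t x
    have he : (fun x' => deriv (fun x'' => u x'' y t) x') = fun x' =>
        ((1 - Real.exp (-(2 * t * κ * π ^ 2))) / κ) *
          (-(π * Real.sin (π * x')) * Real.cos (π * y)) := by
      funext x'; exact hux y t x'
    rw [he]
    exact (((((hd_sin x).const_mul π).neg).mul_const (Real.cos (π * y))).const_mul _).deriv
  have huyy : ∀ x t y : ℝ, deriv (fun y' => deriv (fun y'' => u x y'' t) y') y =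
      ((1 - Real.exp (-(2 * t * κ * π ^ 2))) / κ) *
        (Real.cos (π * x) * -(π * (π * Real.cos (π * y)))) := by
    intro x t y
    have he : (fun y' => deriv (fun y'' => u x y'' t) y') = fun y' =>
        ((1 - Real.exp (-(2 * t * κ * π ^ 2))) / κ) *
          (Real.cos (π * x) * -(π * Real.sin (π * y'))) := by
      funext y'; exact huy x t y'
    rw [he]
    exact (((((hd_sin y).const_mul π).neg).const_mul (Real.cos (π * x))).const_mul _).deriv
  -- derivatives of ψ
  have hψx : ∀ x y : ℝ, deriv (fun x' => ψ x' y) x =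
      -(π * Real.sin (π * x)) * Real.cos (π * y) := by
    intro x y
    have he : (fun x' => ψ x' y) = fun x' => Real.cos (π * x') * Real.cos (π * y) := by
      funext x'; rw [hψ]
    rw [he]
    exact ((hd_cos x).mul_const (Real.cos (π * y))).deriv
  have hψy : ∀ x y : ℝ, deriv (fun y' => ψ x y') y =
      Real.cos (π * x) * -(π * Real.sin (π * y)) := by
    intro x y
    have he : (fun y' => ψ x y') = fun y' => Real.cos (π * x) * Real.cos (π * y') := by
      funext y'; rw [hψ]
    rw [he]
    exact ((hd_cos y).const_mul (Real.cos (π * x))).deriv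
  -- time derivative
  have hut : ∀ x y t : ℝ, deriv (fun t' => u x y t') t =
      2 * π ^ 2 * Real.exp (-(2 * t * κ * π ^ 2)) *
        (Real.cos (π * x) * Real.cos (π * y)) := by
    intro x y t
    have he : (fun t' => u x y t') = fun t' =>
        ((1 - Real.exp (-(2 * t' * κ * π ^ 2))) / κ) *
          (Real.cos (π * x) * Real.cos (π * y)) := by
      funext t'; rw [hu, hψ]
    rw [he]
    exact ((hd_c κ hκ' t).mul_const _).deriv
  refine ⟨?_, ?_, ?_⟩
  · intro x y
    rw [hu]
    norm_num
  · intro x y t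
    rw [hut, huxx, huyy, hψ]
    field_simp
    ring
  · intro x y t
    rw [hψx, hψy, hux, huy]
    ring
end
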